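/- Let M₁, M₂ ∈ S^n and suppose there exists (α₁,α₂) ≠ (0,0) with α₁M₁ + α₂M₂ positive semidefinite. Then S({M₁,M₂}) = {X ⪰ 0 : ⟨M₁,X⟩ ≥ 0, ⟨M₂,X⟩ ≥ 0} is rank-one generated. -/

import Mathlib

/-!
Write `X ∈ S({M₁, M₂})` as `∑ vᵢ vᵢᵀ` and follow the points `pᵢ = (vᵢᵀ M₁ vᵢ, vᵢᵀ M₂ vᵢ)`, which sum
to `t = (⟨M₁, X⟩, ⟨M₂, X⟩)` in the closed first quadrant. Replacing two vectors `x, y` by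
`(c x + d y, -d x + c y)` with `c² + d² = 1` keeps `x xᵀ + y yᵀ`, and by the intermediate value
theorem the rotation can be chosen to make a given quadratic form vanish on the first vector.
Repeating this, for a single `M` the decomposition can be made so that all `vᵢᵀ M vᵢ` have one
sign, i.e. are nonnegative multiples of `⟨M, X⟩`.

Positive semidefiniteness of `N = α M₁ + β M₂` keeps every `pᵢ` in the half-plane
`α a + β b ≥ 0`. If `⟨N, X⟩ > 0`, use `M = t₂ M₁ - t₁ M₂`: the `pᵢ` land on the line `ℝ t`, whose
intersection with the half-plane is the ray `ℝ₊ t`. If `⟨N, X⟩ = 0`, every `pᵢ` lies on the line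
`α a + β b = 0`, which contains `t`; `M = β M₁ - α M₂` then makes each `pᵢ` a nonnegative multiple
of `t`.
-/

open Matrix Set

noncomputable section

/-- The set of rank-one (outer product) matrices `x xᵀ`. -/
def RankOneSet (n : ℕ) : Set (Matrix (Fin n) (Fin n) ℝ) :=
  {X | ∃ x : Fin n → ℝ, X = vecMulVec x x}

/-- A set of PSD matrices is rank-one generated if it equals the convex hull of its
rank-one members. -/
def IsROG {n : ℕ} (S : Set (Matrix (Fin n) (Fin n) ℝ)) : Prop :=
  S = convexHull ℝ (S ∩ RankOneSet n)

/-- `ℝ₊X` is an extreme ray of `S`: `X ∈ S`, `X ≠ 0`, and whenever `X = (Y+Z)/2` with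
`Y, Z ∈ S`, both `Y` and `Z` lie on the ray `ℝ₊X`. -/
def IsExtremeRay' {n : ℕ} (S : Set (Matrix (Fin n) (Fin n) ℝ))
    (X : Matrix (Fin n) (Fin n) ℝ) : Prop :=
  X ∈ S ∧ X ≠ 0 ∧ ∀ Y ∈ S, ∀ Z ∈ S, X = (1/2 : ℝ) • (Y + Z) →
    (∃ α : ℝ, 0 ≤ α ∧ Y = α • X) ∧ (∃ β : ℝ, 0 ≤ β ∧ Z = β • X)

/-- `S(𝓜) = {X ⪰ 0 : ⟨N, X⟩ ≥ 0 ∀ N ∈ 𝓜}` with the trace inner product. -/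
def SCone {n : ℕ} (𝓜 : Set (Matrix (Fin n) (Fin n) ℝ)) : Set (Matrix (Fin n) (Fin n) ℝ) :=
  {X | X.PosSemidef ∧ ∀ N ∈ 𝓜, 0 ≤ (N * X).trace}

/-- `T(𝓜) = {X ⪰ 0 : ⟨N, X⟩ = 0 ∀ N ∈ 𝓜}` with the trace inner product. -/
def TCone {n : ℕ} (𝓜 : Set (Matrix (Fin n) (Fin n) ℝ)) : Set (Matrix (Fin n) (Fin n) ℝ) :=
  {X | X.PosSemidef ∧ ∀ N ∈ 𝓜, (N * X).trace = 0}

theorem Multiset.exists_nonneg_mul_sum_of_forall_nonneg {s : Multiset ℝ} (hs : ∀ a ∈ s, 0 ≤ a)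
    {a : ℝ} (ha : a ∈ s) : ∃ c, 0 ≤ c ∧ a = c * s.sum := by
  have ha_le := Multiset.single_le_sum hs a ha
  rcases (Multiset.sum_nonneg hs).eq_or_lt with hsum | hsum
  · exact ⟨0, le_rfl, by linarith [hs a ha]⟩
  · exact ⟨a / s.sum, div_nonneg (hs a ha) hsum.le, (div_mul_cancel₀ a hsum.ne').symm⟩

theorem Multiset.exists_nonneg_mul_sum_of_sign_const {s : Multiset ℝ}
    (hs : (∀ a ∈ s, 0 ≤ a) ∨ ∀ a ∈ s, a ≤ 0) {a : ℝ} (ha : a ∈ s) :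
    ∃ c, 0 ≤ c ∧ a = c * s.sum := by
  rcases hs with hs | hs
  · exact exists_nonneg_mul_sum_of_forall_nonneg hs ha
  · obtain ⟨c, hc, h⟩ := exists_nonneg_mul_sum_of_forall_nonneg (s := s.map Neg.neg)
      (by simpa using hs) (Multiset.mem_map_of_mem _ ha)
    exact ⟨c, hc, by rw [Multiset.sum_map_neg'] at h; linarith⟩

section

variable {ι : Type*}

def sumOuter (s : Multiset (ι → ℝ)) : Matrix ι ι ℝ :=
  (s.map fun v => vecMulVec v v).sum

@[simp]
theorem sumOuter_cons (v : ι → ℝ) (s : Multiset (ι → ℝ)) :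
    sumOuter (v ::ₘ s) = vecMulVec v v + sumOuter s := by
  simp [sumOuter]

theorem vecMulVec_self_add_eq_rotate (x y : ι → ℝ) {c d : ℝ} (h : c ^ 2 + d ^ 2 = 1) :
    vecMulVec x x + vecMulVec y y =
      vecMulVec (c • x + d • y) (c • x + d • y) + vecMulVec (-d • x + c • y) (-d • x + c • y) := by
  ext i j
  simp only [Matrix.add_apply, vecMulVec_apply, Pi.add_apply, Pi.smul_apply, smul_eq_mul]
  linear_combination (-(x i * x j) - y i * y j) * h

variable [Fintype ι]

theorem trace_mul_vecMulVec_self (M : Matrix ι ι ℝ) (v : ι → ℝ) :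
    (M * vecMulVec v v).trace = v ⬝ᵥ M *ᵥ v := by
  rw [mul_vecMulVec, trace_vecMulVec, dotProduct_comm]

theorem trace_mul_sumOuter (M : Matrix ι ι ℝ) (s : Multiset (ι → ℝ)) :
    (M * sumOuter s).trace = (s.map fun v => v ⬝ᵥ M *ᵥ v).sum := by
  induction s using Multiset.induction_on with
  | empty => simp [sumOuter]
  | cons v s ih => rw [sumOuter_cons, Matrix.mul_add, trace_add, trace_mul_vecMulVec_self, ih,
      Multiset.map_cons, Multiset.sum_cons]

theorem Matrix.PosSemidef.exists_eq_sumOuter {X : Matrix ι ι ℝ} (hX : X.PosSemidef) :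
    ∃ s, X = sumOuter s := by
  obtain ⟨m, v, rfl⟩ := Matrix.posSemidef_iff_eq_sum_vecMulVec.1 hX
  refine ⟨Finset.univ.val.map v, ?_⟩
  simp only [star_trivial, sumOuter, Multiset.map_map]
  rfl

theorem dotProduct_mulVec_add_smul (A B : Matrix ι ι ℝ) (a b : ℝ) (v : ι → ℝ) :
    v ⬝ᵥ (a • A + b • B) *ᵥ v = a * (v ⬝ᵥ A *ᵥ v) + b * (v ⬝ᵥ B *ᵥ v) := by
  simp [add_mulVec, smul_mulVec, dotProduct_add, dotProduct_smul]

theorem Matrix.PosSemidef.dotProduct_mulVec_self_nonneg {M : Matrix ι ι ℝ} (hM : M.PosSemidef)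
    (v : ι → ℝ) : 0 ≤ v ⬝ᵥ M *ᵥ v := by
  simpa using hM.dotProduct_mulVec_nonneg v

theorem exists_rotate_dotProduct_mulVec_eq_zero (M : Matrix ι ι ℝ) {x y : ι → ℝ}
    (hx : x ⬝ᵥ M *ᵥ x ≤ 0) (hy : 0 ≤ y ⬝ᵥ M *ᵥ y) :
    ∃ c d : ℝ, c ^ 2 + d ^ 2 = 1 ∧ (c • x + d • y) ⬝ᵥ M *ᵥ (c • x + d • y) = 0 := by
  let f : ℝ → ℝ := fun θ =>
    (Real.cos θ • x + Real.sin θ • y) ⬝ᵥ M *ᵥ (Real.cos θ • x + Real.sin θ • y)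
  have hf : Continuous f := by fun_prop
  obtain ⟨θ, -, hθ⟩ := intermediate_value_Icc (by positivity : (0:ℝ) ≤ Real.pi / 2) hf.continuousOn
    (show (0:ℝ) ∈ Icc (f 0) (f (Real.pi / 2)) by simp [f, hx, hy])
  exact ⟨Real.cos θ, Real.sin θ, by rw [add_comm, Real.sin_sq_add_cos_sq], hθ⟩

theorem exists_sumOuter_eq_sign_const (M : Matrix ι ι ℝ) (s : Multiset (ι → ℝ)) :
    ∃ g, sumOuter g = sumOuter s ∧
      ((∀ v ∈ g, 0 ≤ v ⬝ᵥ M *ᵥ v) ∨ ∀ v ∈ g, v ⬝ᵥ M *ᵥ v ≤ 0) := by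
  induction hcard : Multiset.card s using Nat.strong_induction_on generalizing s with
  | _ k ih =>
    by_cases hsign : (∀ v ∈ s, 0 ≤ v ⬝ᵥ M *ᵥ v) ∨ ∀ v ∈ s, v ⬝ᵥ M *ᵥ v ≤ 0
    · exact ⟨s, rfl, hsign⟩
    push Not at hsign
    obtain ⟨⟨x, hxs, hx⟩, ⟨y, hys, hy⟩⟩ := hsign
    obtain ⟨s', rfl⟩ := Multiset.exists_cons_of_mem hxs
    have hys' : y ∈ s' := (Multiset.mem_cons.1 hys).resolve_left (by rintro rfl; linarith)
    obtain ⟨t, rfl⟩ := Multiset.exists_cons_of_mem hys'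
    obtain ⟨c, d, hcd, hu⟩ := exists_rotate_dotProduct_mulVec_eq_zero M hx.le hy.le
    obtain ⟨g, hg, hgsign⟩ := ih (Multiset.card ((-d • x + c • y) ::ₘ t)) (by simp [← hcard])
      ((-d • x + c • y) ::ₘ t) rfl
    refine ⟨(c • x + d • y) ::ₘ g, ?_, ?_⟩
    · rw [sumOuter_cons, hg, sumOuter_cons, ← add_assoc, ← vecMulVec_self_add_eq_rotate x y hcd]
      simp only [sumOuter_cons, add_assoc]
    · simp only [Multiset.forall_mem_cons, hu, le_refl, true_and]
      exact hgsign

theorem exists_sumOuter_eq_forall_mem_ray (M : Matrix ι ι ℝ) (s : Multiset (ι → ℝ)) :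
    ∃ g, sumOuter g = sumOuter s ∧
      ∀ v ∈ g, ∃ c, 0 ≤ c ∧ v ⬝ᵥ M *ᵥ v = c * (M * sumOuter s).trace := by
  obtain ⟨g, hg, hsign⟩ := exists_sumOuter_eq_sign_const M s
  refine ⟨g, hg, fun v hv => ?_⟩
  rw [← hg, trace_mul_sumOuter]
  exact Multiset.exists_nonneg_mul_sum_of_sign_const (by simpa using hsign)
    (Multiset.mem_map_of_mem _ hv)

theorem trace_smul_add_smul_mul (A B X : Matrix ι ι ℝ) (a b : ℝ) :
    ((a • A + b • B) * X).trace = a * (A * X).trace + b * (B * X).trace := by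
  simp [add_mul, trace_add]

theorem Matrix.PosSemidef.trace_mul_sumOuter_nonneg {N : Matrix ι ι ℝ} (hN : N.PosSemidef)
    (s : Multiset (ι → ℝ)) : 0 ≤ (N * sumOuter s).trace := by
  rw [trace_mul_sumOuter]
  exact Multiset.sum_nonneg fun _ hx => by
    obtain ⟨v, -, rfl⟩ := Multiset.mem_map.1 hx
    exact hN.dotProduct_mulVec_self_nonneg v

theorem Matrix.PosSemidef.dotProduct_mulVec_eq_zero_of_trace_mul_sumOuter_eq_zero
    {N : Matrix ι ι ℝ} (hN : N.PosSemidef) {s : Multiset (ι → ℝ)}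
    (hs : (N * sumOuter s).trace = 0) {v : ι → ℝ} (hv : v ∈ s) : v ⬝ᵥ N *ᵥ v = 0 := by
  rw [trace_mul_sumOuter] at hs
  exact Multiset.all_zero_of_le_zero_le_of_sum_eq_zero
    (by simpa using fun v _ => hN.dotProduct_mulVec_self_nonneg v) hs _
    (Multiset.mem_map_of_mem (fun v => v ⬝ᵥ N *ᵥ v) hv)

section TwoConstraints

variable {M₁ M₂ : Matrix ι ι ℝ} {α β : ℝ} {s : Multiset (ι → ℝ)}

theorem exists_sumOuter_eq_forall_nonneg_of_trace_comb_pos (hN : (α • M₁ + β • M₂).PosSemidef)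
    (h₁ : 0 ≤ (M₁ * sumOuter s).trace) (h₂ : 0 ≤ (M₂ * sumOuter s).trace)
    (hpos : 0 < α * (M₁ * sumOuter s).trace + β * (M₂ * sumOuter s).trace) :
    ∃ g, sumOuter g = sumOuter s ∧ ∀ v ∈ g, 0 ≤ v ⬝ᵥ M₁ *ᵥ v ∧ 0 ≤ v ⬝ᵥ M₂ *ᵥ v := by
  set t₁ := (M₁ * sumOuter s).trace
  set t₂ := (M₂ * sumOuter s).trace
  obtain ⟨g, hg, hray⟩ := exists_sumOuter_eq_forall_mem_ray (t₂ • M₁ + (-t₁) • M₂) s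
  refine ⟨g, hg, fun v hv => ?_⟩
  set a := v ⬝ᵥ M₁ *ᵥ v
  set b := v ⬝ᵥ M₂ *ᵥ v
  have hNv : 0 ≤ α * a + β * b := by
    simpa only [dotProduct_mulVec_add_smul] using hN.dotProduct_mulVec_self_nonneg v
  obtain ⟨c, -, hc⟩ := hray v hv
  rw [dotProduct_mulVec_add_smul, trace_smul_add_smul_mul] at hc
  -- `(a, b)` lies on the line through `(t₁, t₂)`, which meets the half-plane `α a + β b ≥ 0`
  -- only in the ray through `(t₁, t₂)`
  have hline : t₂ * a - t₁ * b = 0 := by linear_combination hc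
  refine ⟨nonneg_of_mul_nonneg_left ?_ hpos, nonneg_of_mul_nonneg_left ?_ hpos⟩
  · rw [show a * (α * t₁ + β * t₂) = t₁ * (α * a + β * b) by linear_combination β * hline]
    exact mul_nonneg h₁ hNv
  · rw [show b * (α * t₁ + β * t₂) = t₂ * (α * a + β * b) by linear_combination (-α) * hline]
    exact mul_nonneg h₂ hNv

theorem exists_sumOuter_eq_forall_nonneg_of_trace_comb_eq_zero (hαβ : (α, β) ≠ (0, 0))
    (hN : (α • M₁ + β • M₂).PosSemidef)
    (h₁ : 0 ≤ (M₁ * sumOuter s).trace) (h₂ : 0 ≤ (M₂ * sumOuter s).trace)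
    (hzero : α * (M₁ * sumOuter s).trace + β * (M₂ * sumOuter s).trace = 0) :
    ∃ g, sumOuter g = sumOuter s ∧ ∀ v ∈ g, 0 ≤ v ⬝ᵥ M₁ *ᵥ v ∧ 0 ≤ v ⬝ᵥ M₂ *ᵥ v := by
  set t₁ := (M₁ * sumOuter s).trace
  set t₂ := (M₂ * sumOuter s).trace
  have hαβ_sq : α ^ 2 + β ^ 2 ≠ 0 := by
    contrapose! hαβ
    rw [show α = 0 by nlinarith, show β = 0 by nlinarith]
  obtain ⟨g, hg, hray⟩ := exists_sumOuter_eq_forall_mem_ray (β • M₁ + (-α) • M₂) s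
  refine ⟨g, hg, fun v hv => ?_⟩
  set a := v ⬝ᵥ M₁ *ᵥ v
  set b := v ⬝ᵥ M₂ *ᵥ v
  -- `(a, b)` and `(t₁, t₂)` both lie on the line `α a + β b = 0`, on which `β a - α b` is a
  -- nonzero linear coordinate
  have hNv : α * a + β * b = 0 := by
    rw [← dotProduct_mulVec_add_smul]
    exact hN.dotProduct_mulVec_eq_zero_of_trace_mul_sumOuter_eq_zero
      (by rw [hg, trace_smul_add_smul_mul, hzero]) hv
  obtain ⟨c, hc0, hc⟩ := hray v hv
  rw [dotProduct_mulVec_add_smul, trace_smul_add_smul_mul] at hc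
  have ha : a = c * t₁ := mul_left_cancel₀ hαβ_sq <| by
    linear_combination β * hc + α * hNv - (c * α) * hzero
  have hb : b = c * t₂ := mul_left_cancel₀ hαβ_sq <| by
    linear_combination (-α) * hc + β * hNv - (c * β) * hzero
  exact ⟨ha ▸ mul_nonneg hc0 h₁, hb ▸ mul_nonneg hc0 h₂⟩

theorem exists_sumOuter_eq_forall_nonneg_of_posSemidef_comb (hαβ : (α, β) ≠ (0, 0))
    (hN : (α • M₁ + β • M₂).PosSemidef)
    (h₁ : 0 ≤ (M₁ * sumOuter s).trace) (h₂ : 0 ≤ (M₂ * sumOuter s).trace) :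
    ∃ g, sumOuter g = sumOuter s ∧ ∀ v ∈ g, 0 ≤ v ⬝ᵥ M₁ *ᵥ v ∧ 0 ≤ v ⬝ᵥ M₂ *ᵥ v := by
  have hN_trace := hN.trace_mul_sumOuter_nonneg s
  rw [trace_smul_add_smul_mul] at hN_trace
  rcases hN_trace.lt_or_eq with hpos | hzero
  · exact exists_sumOuter_eq_forall_nonneg_of_trace_comb_pos hN h₁ h₂ hpos
  · exact exists_sumOuter_eq_forall_nonneg_of_trace_comb_eq_zero hαβ hN h₁ h₂ hzero.symm

end TwoConstraints

end

open Pointwise in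
theorem Multiset.sum_mem_convexHull_of_two_smul_mem {E : Type*} [AddCommGroup E] [Module ℝ E]
    {C : Set E} (h0 : 0 ∈ C) (h2 : ∀ x ∈ C, (2 : ℝ) • x ∈ C) {g : Multiset E}
    (hg : ∀ x ∈ g, x ∈ C) : g.sum ∈ convexHull ℝ C := by
  induction g using Multiset.induction_on with
  | empty => exact subset_convexHull ℝ C h0
  | cons x g ih =>
    rw [Multiset.forall_mem_cons] at hg
    have two_smul_mem {y} (hy : y ∈ convexHull ℝ C) : (2 : ℝ) • y ∈ convexHull ℝ C := by
      have hy2 : (2 : ℝ) • y ∈ convexHull ℝ ((2 : ℝ) • C) := by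
        rw [convexHull_smul]
        exact Set.smul_mem_smul_set hy
      exact convexHull_mono (by rintro _ ⟨x, hx, rfl⟩; exact h2 x hx) hy2
    have hmid := convex_convexHull ℝ C (two_smul_mem (subset_convexHull ℝ C hg.1))
      (two_smul_mem (ih hg.2)) (by norm_num : (0:ℝ) ≤ 1/2) (by norm_num : (0:ℝ) ≤ 1/2) (by norm_num)
    rwa [smul_smul, smul_smul, show (1 / 2 : ℝ) * 2 = 1 by norm_num, one_smul, one_smul,
      ← Multiset.sum_cons] at hmid

theorem convex_SCone {n : ℕ} (𝓜 : Set (Matrix (Fin n) (Fin n) ℝ)) : Convex ℝ (SCone 𝓜) := by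
  intro X hX Y hY a b ha hb _
  refine ⟨(hX.1.smul ha).add (hY.1.smul hb), fun N hN => ?_⟩
  rw [Matrix.mul_add, trace_add, Matrix.mul_smul, Matrix.mul_smul, trace_smul, trace_smul]
  exact add_nonneg (smul_nonneg ha (hX.2 N hN)) (smul_nonneg hb (hY.2 N hN))

theorem smul_mem_SCone {n : ℕ} {𝓜 : Set (Matrix (Fin n) (Fin n) ℝ)} {r : ℝ} (hr : 0 ≤ r)
    {X : Matrix (Fin n) (Fin n) ℝ} (hX : X ∈ SCone 𝓜) : r • X ∈ SCone 𝓜 :=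
  ⟨hX.1.smul hr, fun N hN => by
    rw [Matrix.mul_smul, trace_smul]
    exact smul_nonneg hr (hX.2 N hN)⟩

theorem smul_mem_RankOneSet {n : ℕ} {r : ℝ} (hr : 0 ≤ r) {X : Matrix (Fin n) (Fin n) ℝ}
    (hX : X ∈ RankOneSet n) : r • X ∈ RankOneSet n := by
  obtain ⟨x, rfl⟩ := hX
  refine ⟨Real.sqrt r • x, ?_⟩
  rw [smul_vecMulVec, vecMulVec_smul, smul_smul, Real.mul_self_sqrt hr]

theorem zero_mem_SCone {n : ℕ} (𝓜 : Set (Matrix (Fin n) (Fin n) ℝ)) : 0 ∈ SCone 𝓜 :=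
  ⟨PosSemidef.zero, fun N _ => by simp⟩

theorem zero_mem_RankOneSet (n : ℕ) : 0 ∈ RankOneSet n :=
  ⟨0, by simp⟩

theorem vecMulVec_self_mem_SCone {n : ℕ} {𝓜 : Set (Matrix (Fin n) (Fin n) ℝ)} {v : Fin n → ℝ}
    (hv : ∀ N ∈ 𝓜, 0 ≤ v ⬝ᵥ N *ᵥ v) : vecMulVec v v ∈ SCone 𝓜 :=
  ⟨by simpa using posSemidef_vecMulVec_self_star v, fun N hN => by
    rw [trace_mul_vecMulVec_self]
    exact hv N hN⟩

theorem stmt_10_general {n : ℕ} (M₁ M₂ : Matrix (Fin n) (Fin n) ℝ)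
    (h : ∃ α β : ℝ, (α, β) ≠ (0, 0) ∧ (α • M₁ + β • M₂).PosSemidef) :
    IsROG (SCone {M₁, M₂}) := by
  obtain ⟨α, β, hαβ, hN⟩ := h
  refine subset_antisymm (fun X hX => ?_) (convexHull_min inter_subset_left (convex_SCone _))
  obtain ⟨s, rfl⟩ := hX.1.exists_eq_sumOuter
  obtain ⟨g, hg, hgood⟩ := exists_sumOuter_eq_forall_nonneg_of_posSemidef_comb hαβ hN
    (hX.2 M₁ (by simp)) (hX.2 M₂ (by simp))
  rw [← hg]
  refine Multiset.sum_mem_convexHull_of_two_smul_mem (C := SCone {M₁, M₂} ∩ RankOneSet n)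
    ⟨zero_mem_SCone _, zero_mem_RankOneSet n⟩
    (fun Y hY => ⟨smul_mem_SCone zero_le_two hY.1, smul_mem_RankOneSet zero_le_two hY.2⟩)
    fun Y hY => ?_
  obtain ⟨v, hv, rfl⟩ := Multiset.mem_map.1 hY
  refine ⟨vecMulVec_self_mem_SCone ?_, v, rfl⟩
  rintro N (rfl | rfl)
  exacts [(hgood v hv).1, (hgood v hv).2]

theorem stmt_10 {n : ℕ} (M₁ M₂ : Matrix (Fin n) (Fin n) ℝ)
    (h₁ : M₁.IsSymm) (h₂ : M₂.IsSymm)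
    (h : ∃ α β : ℝ, (α, β) ≠ (0, 0) ∧ (α • M₁ + β • M₂).PosSemidef) :
    IsROG (SCone {M₁, M₂}) :=
  stmt_10_general M₁ M₂ h
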